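/- arXiv:1312.7185 — 3 statements merged into one kernel-verified Lean document; each statement's English description precedes it below -/
import Mathlib

section
/- Let a₁,a₂,a₃ be pairwise coprime positive integers with a₁ > a₂ > a₃ > 1. Then g(a₁,a₂,a₃) = L₁·a₁ + max{ [L₂·a₂·a₃⁻¹]_{a₁}·a₃ , [L₃·a₃·a₂⁻¹]_{a₁}·a₂ } − a₁ − a₂ − a₃. -/
/-- The numerical semigroup generated by `a` and `b`:
`⟨a,b⟩ = {λ₁a + λ₂b : λ₁, λ₂ ∈ ℕ}`. -/
def numSg (a b : ℕ) : Set ℕ := {x | ∃ p q : ℕ, x = p * a + q * b}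

/-- `[m⁻¹]ₙ`: the representative in `[0,n)` of the inverse of `m` modulo `n`
(meaningful when `gcd m n = 1` and `n > 0`).  The remainder operator `[m]ₙ`
is ordinary `m % n`. -/
noncomputable def modInv (m n : ℕ) : ℕ := ((m : ZMod n)⁻¹).val


/-- `Lval a b c` is the least positive integer `x` with `x*a ∈ ⟨b,c⟩`. -/
noncomputable def Lval (a b c : ℕ) : ℕ := sInf {x : ℕ | 0 < x ∧ x * a ∈ numSg b c}

/-- The numerical semigroup generated by `a`, `b`, `c`. -/
def numSg3 (a b c : ℕ) : Set ℕ := {x | ∃ p q r : ℕ, x = p * a + q * b + r * c}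

lemma numSg_comm (a b : ℕ) : numSg a b = numSg b a := by
  ext x; constructor <;> (rintro ⟨p, q, rfl⟩; exact ⟨q, p, by ring⟩)

lemma mem_numSg_of_int {a b : ℕ} {x : ℕ} {p q : ℤ} (hp : 0 ≤ p) (hq : 0 ≤ q)
    (h : (x:ℤ) = p * a + q * b) : x ∈ numSg a b := by
  refine ⟨p.toNat, q.toNat, ?_⟩
  have h2 : (x:ℤ) = (p.toNat : ℤ) * a + (q.toNat:ℤ) * b := by
    rw [Int.toNat_of_nonneg hp, Int.toNat_of_nonneg hq]; exact h
  exact_mod_cast h2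

noncomputable def Afun (n b c i : ℕ) : ℕ := sInf {x | x ∈ numSg b c ∧ x % n = i}

lemma Afun_comm (n b c i : ℕ) : Afun n b c i = Afun n c b i := by
  unfold Afun; rw [numSg_comm]

lemma Afun_min {n b c i x : ℕ} (hx : x ∈ numSg b c) (hxi : x % n = i) : Afun n b c i ≤ x :=
  Nat.sInf_le ⟨hx, hxi⟩

lemma modinv_solve (n a c : ℕ) [NeZero n] (cop : Nat.Coprime c n) :
    ((a * modInv c n) % n) * c ≡ a [MOD n] := by
  have hu : IsUnit (c : ZMod n) := (ZMod.isUnit_iff_coprime c n).2 cop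
  have : ((((a * modInv c n) % n) * c : ℕ) : ZMod n) = (a : ZMod n) := by
    rw [Nat.cast_mul, ZMod.natCast_mod, Nat.cast_mul]
    rw [modInv, ZMod.natCast_val, ZMod.cast_id, mul_assoc, ZMod.inv_mul_of_unit _ hu, mul_one]
  exact (ZMod.natCast_eq_natCast_iff _ _ _).1 this

lemma Afun_spec (n b c i : ℕ) [NeZero n] (cop : Nat.Coprime b n) (hi : i < n) :
    Afun n b c i ∈ numSg b c ∧ Afun n b c i % n = i := by
  have hne : {x | x ∈ numSg b c ∧ x % n = i}.Nonempty := by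
    refine ⟨((i * modInv b n) % n) * b, ⟨(i * modInv b n) % n, 0, by ring⟩, ?_⟩
    have h := modinv_solve n i b cop
    unfold Nat.ModEq at h
    rw [h, Nat.mod_eq_of_lt hi]
  exact Nat.sInf_mem hne

lemma mem_numSg3_iff {n b c : ℕ} [NeZero n] (cop : Nat.Coprime b n) (N : ℕ) :
    N ∈ numSg3 n b c ↔ Afun n b c (N % n) ≤ N := by
  constructor
  · rintro ⟨p, q, r, rfl⟩
    have he : p * n + q * b + r * c = (q * b + r * c) + p * n := by ring
    have hm : (q * b + r * c) % n = (p * n + q * b + r * c) % n := by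
      rw [he, Nat.add_mul_mod_self_right]
    have h1 : Afun n b c ((p * n + q * b + r * c) % n) ≤ q * b + r * c :=
      Afun_min ⟨q, r, rfl⟩ hm
    zify at h1 ⊢; linarith [mul_nonneg (Int.natCast_nonneg p) (Int.natCast_nonneg n)]
  · intro hle
    obtain ⟨hmem, hmod⟩ := Afun_spec n b c (N % n) cop (Nat.mod_lt _ (NeZero.pos n))
    obtain ⟨q, r, hqr⟩ := hmem
    have hdvd : n ∣ N - Afun n b c (N % n) := (Nat.modEq_iff_dvd' hle).1 hmod
    obtain ⟨t, ht⟩ := hdvd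
    refine ⟨t, q, r, ?_⟩
    have : N = n * t + Afun n b c (N % n) := by omega
    rw [this, hqr]; ring

lemma Lval_mem {a b c x : ℕ} (hx : 0 < x) (hmem : x * a ∈ numSg b c) :
    (0 < Lval a b c ∧ (Lval a b c) * a ∈ numSg b c) ∧ Lval a b c ≤ x :=
  ⟨Nat.sInf_mem (⟨x, hx, hmem⟩ : Set.Nonempty {x : ℕ | 0 < x ∧ x * a ∈ numSg b c}),
   Nat.sInf_le ⟨hx, hmem⟩⟩

lemma Lval_min {a b c k : ℕ} (hk : 0 < k) (h : k < Lval a b c) : k * a ∉ numSg b c := by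
  intro hmem
  have h2 : Lval a b c ≤ k := Nat.sInf_le ⟨hk, hmem⟩
  omega

/-- canonical `u` from a congruence solution -/
lemma exists_u {n b c L x : ℕ} (cop_nc : Nat.Coprime n c) (hx : x < n)
    (hcong : x * c ≡ L * b [MOD n]) (hmem : L * b ∈ numSg n c) :
    ∃ u, L * b = u * n + x * c := by
  obtain ⟨p, q, h⟩ := hmem
  have hq : q ≡ x [MOD n] := by
    apply Nat.ModEq.cancel_right_of_coprime (by simpa [Nat.Coprime] using cop_nc)
    have h1 : q * c ≡ L * b [MOD n] := by
      unfold Nat.ModEq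
      rw [h, show p * n + q * c = q * c + p * n from by ring, Nat.add_mul_mod_self_right]
    exact h1.trans hcong.symm
  have hq' : q % n = x := by
    have := hq; unfold Nat.ModEq at this; rw [this, Nat.mod_eq_of_lt hx]
  obtain ⟨d, hd⟩ : ∃ d, q = n * d + x := ⟨q / n, by rw [← hq']; exact (Nat.div_add_mod q n).symm⟩
  exact ⟨p + d * c, by rw [h, hd]; ring⟩

/-- reduce the `b`-coefficient below `c` -/
lemma exists_rep_small {b c x : ℕ} (hc : 0 < c) (hx : x ∈ numSg b c) :
    ∃ q r : ℕ, q < c ∧ x = q * b + r * c := by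
  obtain ⟨p, r, rfl⟩ := hx
  obtain ⟨d, e, he, hp⟩ : ∃ d e, e < c ∧ p = c * d + e :=
    ⟨p / c, p % c, Nat.mod_lt _ hc, (Nat.div_add_mod p c).symm⟩
  exact ⟨e, r + d * b, he, by rw [hp]; ring⟩

lemma int_pos_of_mul {a b : ℤ} (h : 0 < a * b) (hb : 0 < b) : 0 < a := by
  by_contra hc; push_neg at hc
  nlinarith

/-- generic: `x₂ < L₃` in the nondegenerate case -/
lemma x_lt_L {n b c L2 L3 x2 x3 u2 u3 : ℕ}
    (hb : 0 < b) (hn : 0 < n)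
    (h2 : L2 * b = u2 * n + x2 * c) (h3 : L3 * c = u3 * n + x3 * b)
    (hu : 1 ≤ u2 + u3) (hx3 : 1 ≤ x3)
    (min2 : ∀ k : ℕ, 0 < k → k < L2 → k * b ∉ numSg n c) : x2 < L3 := by
  by_contra hge
  push_neg at hge
  have h2' : (L2:ℤ) * b = u2 * n + x2 * c := by exact_mod_cast h2
  have h3' : (L3:ℤ) * c = u3 * n + x3 * b := by exact_mod_cast h3
  have key : ((L2:ℤ) - x3) * b = (u2 + u3) * n + ((x2:ℤ) - L3) * c := by
    linear_combination h2' + h3'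
  have e1 : (n:ℤ) ≤ ((u2:ℤ) + u3) * n :=
    le_mul_of_one_le_left (by positivity) (by exact_mod_cast hu)
  have e2 : (0:ℤ) ≤ ((x2:ℤ) - L3) * c :=
    mul_nonneg (by simp only [sub_nonneg]; exact_mod_cast hge) (by positivity)
  have hpos : (0:ℤ) < ((L2:ℤ) - x3) * b := by
    rw [key]; have : (0:ℤ) < n := by exact_mod_cast hn
    linarith
  have hx3L2 : ((x3:ℤ)) < L2 := by
    have := int_pos_of_mul hpos (by exact_mod_cast hb); linarith
  have hx3L2' : x3 < L2 := by exact_mod_cast hx3L2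
  refine min2 (L2 - x3) (by omega) (by omega) ?_
  refine mem_numSg_of_int (p := (u2:ℤ) + u3) (q := (x2:ℤ) - L3)
    (by positivity) (by linarith [e2]; ) ?_
  push_cast [Nat.cast_sub hx3L2'.le]
  linear_combination key

/-- generic: the `b`-coefficient of any representation of a class-minimal element
is `< L₂` (nondegenerate case). -/
lemma rep_lt_L {n b c L2 x2 u2 i q r : ℕ} [NeZero n]
    (h2 : L2 * b = u2 * n + x2 * c) (hu2 : 1 ≤ u2)
    (hrep : Afun n b c i = q * b + r * c) (hi : Afun n b c i % n = i) : q < L2 := by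
  by_contra hge; push_neg at hge
  have h2' : (L2:ℤ) * b = u2 * n + x2 * c := by exact_mod_cast h2
  have hyA : ((q - L2) * b + (x2 + r) * c) + u2 * n = Afun n b c i := by
    rw [hrep]; zify [hge]; linear_combination -h2'
  have hymod : ((q - L2) * b + (x2 + r) * c) % n = i := by
    rw [← hi, ← hyA, show ((q - L2) * b + (x2 + r) * c) + u2*n
      = ((q - L2) * b + (x2 + r) * c) + n*u2 from by ring, Nat.add_mul_mod_self_left]
  have hmin := Afun_min (show ((q - L2) * b + (x2 + r) * c) ∈ numSg b c
    from ⟨q - L2, x2 + r, rfl⟩) hymod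
  have hn : 0 < n := NeZero.pos n
  have h5 : n ≤ u2 * n := Nat.le_mul_of_pos_left n hu2
  linarith

/-- downward closure of class-minimality -/
lemma dc {n b c V Q R q r : ℕ}
    (hVmin : ∀ y ∈ numSg b c, y % n = V % n → V ≤ y)
    (hVrep : V = Q * b + R * c) (hq : q ≤ Q) (hr : r ≤ R) :
    ∀ y ∈ numSg b c, y % n = (q * b + r * c) % n → q * b + r * c ≤ y := by
  intro y hy hmod
  by_contra hlt; push_neg at hlt
  obtain ⟨p1, p2, rfl⟩ := hy
  have hD : (p1 + (Q - q)) * b + (p2 + (R - r)) * c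
      = (p1 * b + p2 * c) + ((Q - q) * b + (R - r) * c) := by ring
  have hV2 : V = (q * b + r * c) + ((Q - q) * b + (R - r) * c) := by
    rw [hVrep]; zify [hq, hr]; ring
  have hcong : ((p1 + (Q - q)) * b + (p2 + (R - r)) * c) % n = V % n := by
    rw [hD, hV2]
    exact Nat.ModEq.add_right _ hmod
  have := hVmin _ ⟨p1 + (Q - q), p2 + (R - r), rfl⟩ hcong
  have h6 : (p1 + (Q - q)) * b + (p2 + (R - r)) * c
      < (q * b + r * c) + ((Q - q) * b + (R - r) * c) := by rw [hD]; linarith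
  linarith

/-- The corner element `(L₂-1, L₃-x₂-1)` is minimal in its class (nondegenerate case). -/
lemma corner_min {n b c L2 L3 x2 u2 : ℕ}
    (hn : 0 < n) (hb : 0 < b) (hc : 0 < c) (hbn : b < n) (hL3b : L3 ≤ b)
    (cop_nc : Nat.Coprime n c)
    (h2 : L2 * b = u2 * n + x2 * c)
    (hu2 : 1 ≤ u2) (hx2 : 1 ≤ x2)
    (min2 : ∀ k : ℕ, 0 < k → k < L2 → k * b ∉ numSg n c)
    (min3 : ∀ k : ℕ, 0 < k → k < L3 → k * c ∉ numSg n b)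
    (q r : ℕ) (hq : q < L2) (hr : r < L3)
    (hmod : (n:ℤ) ∣ (((L2:ℤ) - 1) * b + ((L3:ℤ) - x2 - 1) * c) - ((q:ℤ) * b + r * c)) :
    ((L2:ℤ) - 1) * b + ((L3:ℤ) - x2 - 1) * c ≤ (q:ℤ) * b + (r:ℤ) * c := by
  by_contra hlt; push_neg at hlt
  obtain ⟨k, hk⟩ := hmod
  have h2' : (L2:ℤ) * b = u2 * n + x2 * c := by exact_mod_cast h2
  have hn' : (0:ℤ) < n := by exact_mod_cast hn
  have hb' : (0:ℤ) < b := by exact_mod_cast hb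
  have hc' : (0:ℤ) < c := by exact_mod_cast hc
  set A : ℤ := (L2:ℤ) - 1 - q with hA
  set B : ℤ := (L3:ℤ) - x2 - 1 - r with hB
  have hAB : A * b + B * c = n * k := by rw [hA, hB]; linear_combination hk
  have hA0 : 0 ≤ A := by have : (q:ℤ) < L2 := by exact_mod_cast hq
                         rw [hA]; linarith
  have hAle : A ≤ (L2:ℤ) - 1 := by rw [hA]; have : (0:ℤ) ≤ q := by positivity
                                   linarith
  have hBlow : -(x2:ℤ) ≤ B := by have : (r:ℤ) < L3 := by exact_mod_cast hr
                                 rw [hB]; linarith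
  have hBhigh : B ≤ (L3:ℤ) - x2 - 1 := by rw [hB]; have : (0:ℤ) ≤ r := by positivity
                                          linarith
  have hk1 : 1 ≤ k := by
    have h0 : 0 < k * n := by
      have : 0 < A * b + B * c := by rw [hA, hB]; linarith
      rw [hAB] at this; linarith [this]
    have := int_pos_of_mul h0 hn'; linarith
  rcases lt_or_ge B 0 with hBneg | hB0
  · -- B < 0
    have key : A * b = n * k + (-B) * c := by linear_combination hAB
    have hApos : 0 < A := by
      refine int_pos_of_mul ?_ hb'
      rw [key]
      have e1 : (n:ℤ) ≤ n * k := le_mul_of_one_le_right (by positivity) (by exact_mod_cast hk1)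
      have e2 : (c:ℤ) ≤ (-B) * c := le_mul_of_one_le_left (by positivity) (by linarith)
      linarith
    refine min2 A.toNat (by omega) (by omega) ?_
    refine mem_numSg_of_int (p := (k:ℤ)) (q := -B) (by linarith) (by linarith) ?_
    push_cast [Int.toNat_of_nonneg hA0]
    linear_combination key
  rcases le_or_gt k (u2:ℤ) with hku2 | hku2
  · -- B ≥ 0 , k ≤ u2
    have key : ((L2:ℤ) - A) * b = ((u2:ℤ) - k) * n + ((x2:ℤ) + B) * c := by
      linear_combination h2' - hAB
    rcases eq_or_lt_of_le hA0 with hAz | hApos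
    · have hdvd : (n:ℤ) ∣ B * c := ⟨k, by linear_combination hAB + b * hAz⟩
      have hcop : IsCoprime (n:ℤ) (c:ℤ) := Nat.isCoprime_iff_coprime.2 cop_nc
      have hdB : (n:ℤ) ∣ B := hcop.dvd_of_dvd_mul_right hdvd
      rcases eq_or_lt_of_le hB0 with hBz | hBpos
      · have e1 : (n:ℤ) ≤ n * k := le_mul_of_one_le_right (by positivity) (by exact_mod_cast hk1)
        have : A * b + B * c = 0 := by rw [← hAz, ← hBz]; ring
        rw [hAB] at this; linarith
      · have := Int.le_of_dvd hBpos hdB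
        omega
    · refine min2 ((L2:ℤ) - A).toNat (by omega) (by omega) ?_
      refine mem_numSg_of_int (p := (u2:ℤ) - k) (q := (x2:ℤ) + B) (by linarith) (by linarith) ?_
      push_cast [Int.toNat_of_nonneg (show (0:ℤ) ≤ (L2:ℤ) - A by linarith)]
      linear_combination key
  · -- B ≥ 0 , k > u2
    have key : ((x2:ℤ) + B) * c = ((L2:ℤ) - A) * b + ((k:ℤ) - u2) * n := by
      linear_combination hAB - h2'
    refine min3 ((x2:ℤ) + B).toNat (by omega) (by omega) ?_
    refine mem_numSg_of_int (p := (k:ℤ) - u2) (q := (L2:ℤ) - A) (by linarith) (by linarith) ?_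
    push_cast [Int.toNat_of_nonneg (show (0:ℤ) ≤ (x2:ℤ) + B by linarith)]
    linear_combination key

/-- The corner value is the class-minimum (i.e. an `Afun` value). -/
lemma corner_Afun {n b c L2 L3 x2 x3 u2 u3 : ℕ} [NeZero n]
    (hb : 0 < b) (hc : 0 < c) (hbn : b < n) (hL3b : L3 ≤ b)
    (cop_bn : Nat.Coprime b n) (cop_nc : Nat.Coprime n c)
    (h2 : L2 * b = u2 * n + x2 * c) (h3 : L3 * c = u3 * n + x3 * b)
    (hu2 : 1 ≤ u2) (hu3 : 1 ≤ u3) (hx2 : 1 ≤ x2) (hL2pos : 1 ≤ L2) (hx2L3 : x2 < L3)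
    (min2 : ∀ k : ℕ, 0 < k → k < L2 → k * b ∉ numSg n c)
    (min3 : ∀ k : ℕ, 0 < k → k < L3 → k * c ∉ numSg n b) :
    Afun n b c (((L2-1)*b + (L3-x2-1)*c) % n) = (L2-1)*b + (L3-x2-1)*c := by
  have hn : 0 < n := NeZero.pos n
  set V : ℕ := (L2-1)*b + (L3-x2-1)*c with hV
  have hVmem : V ∈ numSg b c := ⟨L2-1, L3-x2-1, rfl⟩
  have hle : Afun n b c (V % n) ≤ V := Afun_min hVmem rfl
  obtain ⟨hAmem, hAmod⟩ := Afun_spec n b c (V % n) cop_bn (Nat.mod_lt _ hn)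
  obtain ⟨q, r, hrep⟩ := hAmem
  have hqL2 : q < L2 := rep_lt_L h2 hu2 hrep hAmod
  have hrL3 : r < L3 := by
    have hrep' : Afun n c b (V % n) = r * c + q * b := by rw [← Afun_comm, hrep]; ring
    have hAmod' : Afun n c b (V % n) % n = V % n := by rw [← Afun_comm]; exact hAmod
    exact rep_lt_L h3 hu3 hrep' hAmod'
  have hVcast : (V:ℤ) = ((L2:ℤ) - 1) * b + ((L3:ℤ) - x2 - 1) * c := by
    rw [hV]
    have e1 : (((L2-1) : ℕ) : ℤ) = (L2:ℤ) - 1 := by omega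
    have e2 : (((L3-x2-1) : ℕ) : ℤ) = (L3:ℤ) - x2 - 1 := by omega
    push_cast [← e1, ← e2]
    ring
  have hdvd : (n:ℤ) ∣ ((V:ℤ) - (Afun n b c (V % n) : ℤ)) := by
    have h0 : n ∣ V - Afun n b c (V % n) := (Nat.modEq_iff_dvd' hle).1 hAmod
    have := Int.natCast_dvd_natCast.2 h0
    rwa [Nat.cast_sub hle] at this
  have := corner_min hn hb hc hbn hL3b cop_nc h2 hu2 hx2 min2 min3 q r hqL2 hrL3
    (by rw [← hVcast]
        have he : ((q:ℤ)) * b + (r:ℤ) * c = ((Afun n b c (V % n) : ℕ) : ℤ) := by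
          rw [hrep]; push_cast; ring
        rw [he]; exact hdvd)
  have hge : V ≤ Afun n b c (V % n) := by
    have h1 : (V:ℤ) ≤ (Afun n b c (V % n) : ℤ) := by
      rw [hVcast]
      calc ((L2:ℤ) - 1) * b + ((L3:ℤ) - x2 - 1) * c ≤ (q:ℤ) * b + (r:ℤ) * c := this
        _ = ((Afun n b c (V % n) : ℕ) : ℤ) := by rw [hrep]; push_cast; ring
    exact_mod_cast h1
  omega

/-- nondegenerate upper bound: every class minimum is ≤ max of the two corners -/
lemma upper_nondeg {n b c L2 L3 x2 x3 u2 u3 : ℕ} [NeZero n]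
    (cop_bn : Nat.Coprime b n)
    (h2 : L2 * b = u2 * n + x2 * c) (h3 : L3 * c = u3 * n + x3 * b)
    (hu2 : 1 ≤ u2) (hu3 : 1 ≤ u3) (hx2L3 : x2 < L3) (hx3L2 : x3 < L2)
    (i : ℕ) (hi : i < n) :
    Afun n b c i ≤ max ((L2-1)*b + (L3-x2-1)*c) ((L2-x3-1)*b + (L3-1)*c) := by
  have hn : 0 < n := NeZero.pos n
  obtain ⟨hAmem, hAmod⟩ := Afun_spec n b c i cop_bn hi
  obtain ⟨q, r, hrep⟩ := hAmem
  have hqL2 : q < L2 := rep_lt_L h2 hu2 hrep hAmod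
  have hrL3 : r < L3 := by
    have hrep' : Afun n c b i = r * c + q * b := by rw [← Afun_comm, hrep]; ring
    exact rep_lt_L h3 hu3 hrep' (by rw [← Afun_comm]; exact hAmod)
  rcases le_or_gt (r + x2 + 1) L3 with hcase | hcase
  · refine le_max_of_le_left ?_
    rw [hrep]
    exact Nat.add_le_add (Nat.mul_le_mul_right _ (by omega)) (Nat.mul_le_mul_right _ (by omega))
  · rcases le_or_gt (q + x3 + 1) L2 with hq2 | hq2
    · refine le_max_of_le_right ?_
      rw [hrep]
      exact Nat.add_le_add (Nat.mul_le_mul_right _ (by omega)) (Nat.mul_le_mul_right _ (by omega))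
    · exfalso
      have h2' : (L2:ℤ) * b = u2 * n + x2 * c := by exact_mod_cast h2
      have h3' : (L3:ℤ) * c = u3 * n + x3 * b := by exact_mod_cast h3
      have hysum : ((q - (L2 - x3)) * b + (r - (L3 - x2)) * c) + (u2 + u3) * n
          = Afun n b c i := by
        rw [hrep]
        zify [show L2 - x3 ≤ q by omega, show L3 - x2 ≤ r by omega, hx3L2.le, hx2L3.le]
        linear_combination -h2' - h3'
      have hymod : ((q - (L2 - x3)) * b + (r - (L3 - x2)) * c) % n = i := by
        rw [← hAmod, ← hysum, show ((q - (L2 - x3)) * b + (r - (L3 - x2)) * c) + (u2+u3)*n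
          = ((q - (L2 - x3)) * b + (r - (L3 - x2)) * c) + n*(u2+u3) from by ring,
          Nat.add_mul_mod_self_left]
      have hmin := Afun_min (⟨_, _, rfl⟩ : ((q - (L2 - x3)) * b + (r - (L3 - x2)) * c) ∈ numSg b c) hymod
      have hX : n ≤ (u2+u3)*n := Nat.le_mul_of_pos_left n (by omega)
      linarith

/-- `L₁ = u₂ + u₃` in the nondegenerate case -/
lemma L1_eq {n b c L2 L3 x2 x3 u2 u3 : ℕ}
    (hn : 0 < n) (hc : 0 < c) (hb : 0 < b)
    (hx2 : 1 ≤ x2) (hx3 : 1 ≤ x3) (hu2 : 1 ≤ u2) (hu3 : 1 ≤ u3)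
    (hx2L3 : x2 < L3) (hx3L2 : x3 < L2)
    (h2 : L2 * b = u2 * n + x2 * c) (h3 : L3 * c = u3 * n + x3 * b)
    (Vmin2 : ∀ y ∈ numSg b c, y % n = ((L2-1)*b + (L3-x2-1)*c) % n → (L2-1)*b + (L3-x2-1)*c ≤ y)
    (Vmin3 : ∀ y ∈ numSg b c, y % n = ((L2-x3-1)*b + (L3-1)*c) % n → (L2-x3-1)*b + (L3-1)*c ≤ y) :
    Lval n b c = u2 + u3 := by
  have h2' : (L2:ℤ) * b = u2 * n + x2 * c := by exact_mod_cast h2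
  have h3' : (L3:ℤ) * c = u3 * n + x3 * b := by exact_mod_cast h3
  have hsum : (L2 - x3) * b + (L3 - x2) * c = (u2 + u3) * n := by
    zify [hx3L2.le, hx2L3.le]; linear_combination h2' + h3'
  obtain ⟨⟨hL1pos, hL1mem⟩, hL1le⟩ :=
    Lval_mem (a := n) (show 0 < u2+u3 by omega) ⟨L2 - x3, L3 - x2, hsum.symm⟩
  obtain ⟨ρ, σ, hρσ⟩ := hL1mem
  have hρσ' : ((Lval n b c : ℤ)) * n = ρ * b + σ * c := by exact_mod_cast hρσ
  have hρ : ρ < L2 := by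
    by_contra hge; push_neg at hge
    have hkey : ((ρ - L2) * b + (x2 + σ) * c) + u2 * n = Lval n b c * n := by
      zify [hge]; linear_combination -hρσ' - h2'
    have hcpos : 0 < (ρ - L2) * b + (x2 + σ) * c := by
      have : c ≤ (x2 + σ) * c := Nat.le_mul_of_pos_left c (by omega)
      omega
    have hu2lt : u2 < Lval n b c := by
      by_contra hle2; push_neg at hle2
      have : Lval n b c * n ≤ u2 * n := Nat.mul_le_mul_right _ hle2
      linarith
    have heq : (ρ - L2) * b + (x2 + σ) * c = (Lval n b c - u2) * n := by
      zify [hu2lt.le, hge]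
      linear_combination -hρσ' - h2'
    exact Lval_min (show 0 < Lval n b c - u2 by omega)
      (show Lval n b c - u2 < Lval n b c by omega) (heq ▸ ⟨ρ - L2, x2 + σ, rfl⟩)
  have hσ : σ < L3 := by
    by_contra hge; push_neg at hge
    have hkey : ((x3 + ρ) * b + (σ - L3) * c) + u3 * n = Lval n b c * n := by
      zify [hge]; linear_combination -hρσ' - h3'
    have hcpos : 0 < (x3 + ρ) * b + (σ - L3) * c := by
      have : b ≤ (x3 + ρ) * b := Nat.le_mul_of_pos_left b (by omega)
      omega
    have hu3lt : u3 < Lval n b c := by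
      by_contra hle2; push_neg at hle2
      have : Lval n b c * n ≤ u3 * n := Nat.mul_le_mul_right _ hle2
      linarith
    have heq : (x3 + ρ) * b + (σ - L3) * c = (Lval n b c - u3) * n := by
      zify [hu3lt.le, hge]
      linear_combination -hρσ' - h3'
    exact Lval_min (show 0 < Lval n b c - u3 by omega)
      (show Lval n b c - u3 < Lval n b c by omega) (heq ▸ ⟨x3 + ρ, σ - L3, rfl⟩)
  have hz : (0:ℕ) ∈ numSg b c := ⟨0, 0, by ring⟩
  have hLn : 0 < Lval n b c * n := Nat.mul_pos hL1pos hn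
  have hσ2 : L3 - x2 ≤ σ := by
    by_contra h; push_neg at h
    have hd := dc Vmin2 rfl (show ρ ≤ L2 - 1 by omega) (show σ ≤ L3 - x2 - 1 by omega)
      0 hz (by rw [← hρσ, Nat.zero_mod, Nat.mul_mod_left])
    linarith [hρσ ▸ hd]
  have hρ2 : L2 - x3 ≤ ρ := by
    by_contra h; push_neg at h
    have hd := dc Vmin3 rfl (show ρ ≤ L2 - x3 - 1 by omega) (show σ ≤ L3 - 1 by omega)
      0 hz (by rw [← hρσ, Nat.zero_mod, Nat.mul_mod_left])
    linarith [hρσ ▸ hd]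
  have hge : (u2+u3) * n ≤ Lval n b c * n := by
    rw [hρσ, ← hsum]
    exact Nat.add_le_add (Nat.mul_le_mul_right _ hρ2) (Nat.mul_le_mul_right _ hσ2)
  have := Nat.le_of_mul_le_mul_right hge hn
  omega

/-- assembly: the largest gap equals (max class-minimum) − n -/
lemma final {n b c K : ℕ} [NeZero n] (cop_bn : Nat.Coprime b n)
    (hK1 : Afun n b c (K % n) = K)
    (hK2 : ∀ i, i < n → Afun n b c i ≤ K)
    (g : ℕ) (hg : IsGreatest {m : ℕ | m ∉ numSg3 n b c} g) : (g:ℤ) = (K:ℤ) - n := by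
  have hn : 0 < n := NeZero.pos n
  have hgn : g ∉ numSg3 n b c := hg.1
  have hAg : g < Afun n b c (g % n) := by
    by_contra h; push_neg at h
    exact hgn ((mem_numSg3_iff cop_bn g).2 h)
  obtain ⟨_, hmod⟩ := Afun_spec n b c (g % n) cop_bn (Nat.mod_lt _ hn)
  have hdvd : n ∣ Afun n b c (g % n) - g :=
    (Nat.modEq_iff_dvd' hAg.le).1 (by unfold Nat.ModEq; omega)
  obtain ⟨t, ht⟩ := hdvd
  have ht' : Afun n b c (g % n) = n * t + g := (Nat.sub_eq_iff_eq_add hAg.le).1 ht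
  have ht1 : 1 ≤ t := by
    rcases Nat.eq_zero_or_pos t with h0 | h1
    · subst h0; simp at ht'; omega
    · exact h1
  have hgnK : g + n ≤ K := by
    have h5 : n ≤ n * t := Nat.le_mul_of_pos_right n ht1
    have h6 := hK2 (g % n) (Nat.mod_lt _ hn)
    linarith
  have hKn : n ≤ K := by omega
  have hKmod : (K - n) % n = K % n := by
    conv_rhs => rw [← Nat.sub_add_cancel hKn]
    rw [Nat.add_mod_right]
  have hKnotmem : (K - n) ∈ {m : ℕ | m ∉ numSg3 n b c} := by
    intro hmem
    rw [mem_numSg3_iff cop_bn, hKmod, hK1] at hmem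
    omega
  have hle := hg.2 hKnotmem
  omega

/-- degenerate case: upper bound for all class minima -/
lemma deg_upper {n b c : ℕ} [NeZero n] (cop_bn : Nat.Coprime b n)
    (hb : 0 < b) (hc : 0 < c) (hL1pos : 0 < Lval n b c)
    (ρ σ : ℕ) (hρc : ρ < c) (hrep : Lval n b c * n = ρ * b + σ * c)
    (i : ℕ) (hi : i < n) :
    Afun n b c i + b + c ≤ Lval n b c * n + b * c := by
  have hn : 0 < n := NeZero.pos n
  obtain ⟨hAmem, hAmod⟩ := Afun_spec n b c i cop_bn hi
  obtain ⟨q, r, hq, hrep2⟩ := exists_rep_small hc hAmem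
  by_contra hgt; push_neg at hgt
  have hrep' : ((Lval n b c : ℤ)) * n = ρ * b + σ * c := by exact_mod_cast hrep
  have hA' : ((Afun n b c i : ℕ) : ℤ) = q * b + r * c := by exact_mod_cast hrep2
  have hgt' : ((Lval n b c : ℤ)) * n + b * c < (Afun n b c i : ℤ) + b + c := by
    exact_mod_cast hgt
  have hb' : (0:ℤ) < b := by exact_mod_cast hb
  have hc' : (0:ℤ) < c := by exact_mod_cast hc
  have h5 : n ≤ Lval n b c * n := Nat.le_mul_of_pos_left n hL1pos
  rcases le_or_gt ρ q with hqρ | hqρ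
  · have hσr : σ ≤ r := by
      by_contra hh; push_neg at hh
      have e1 : (q:ℤ)*b ≤ ((c:ℤ)-1)*b := by
        refine mul_le_mul_of_nonneg_right ?_ hb'.le
        have : (q:ℤ) < c := by exact_mod_cast hq
        linarith
      have e2 : (r:ℤ)*c ≤ ((σ:ℤ)-1)*c := by
        refine mul_le_mul_of_nonneg_right ?_ hc'.le
        have : (r:ℤ) < σ := by exact_mod_cast hh
        linarith
      have e3 : (0:ℤ) ≤ (ρ:ℤ)*b := by positivity
      linarith [hgt', hA', hrep']
    have hyeq : ((q - ρ) * b + (r - σ) * c) + Lval n b c * n = Afun n b c i := by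
      zify [hqρ, hσr]
      linear_combination hrep' - hA'
    have hymod : ((q - ρ) * b + (r - σ) * c) % n = i := by
      rw [← hAmod, ← hyeq, show ((q - ρ) * b + (r - σ) * c) + Lval n b c * n
        = ((q - ρ) * b + (r - σ) * c) + n * Lval n b c from by ring, Nat.add_mul_mod_self_left]
    have hmin := Afun_min (⟨_, _, rfl⟩ : ((q - ρ) * b + (r - σ) * c) ∈ numSg b c) hymod
    linarith
  · have hσr : σ + b ≤ r := by
      by_contra hh; push_neg at hh
      have e1 : (q:ℤ)*b ≤ ((ρ:ℤ)-1)*b := by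
        refine mul_le_mul_of_nonneg_right ?_ hb'.le
        have : (q:ℤ) < ρ := by exact_mod_cast hqρ
        linarith
      have e2 : (r:ℤ)*c ≤ ((σ:ℤ)+b-1)*c := by
        refine mul_le_mul_of_nonneg_right ?_ hc'.le
        have : (r:ℤ) < σ + b := by exact_mod_cast hh
        linarith
      linarith [hgt', hA', hrep']
    obtain ⟨q', hq'⟩ : ∃ q', q + c = ρ + q' := ⟨q + c - ρ, by omega⟩
    obtain ⟨r', hr'⟩ : ∃ r', r = σ + b + r' := ⟨r - σ - b, by omega⟩
    have hq'' : (q:ℤ) + c = ρ + q' := by exact_mod_cast hq'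
    have hr'' : (r:ℤ) = σ + b + r' := by exact_mod_cast hr'
    have hyeq : (q' * b + r' * c) + Lval n b c * n = Afun n b c i := by
      zify
      linear_combination hrep' - hA' - b * hq'' - c * hr''
    have hymod : (q' * b + r' * c) % n = i := by
      rw [← hAmod, ← hyeq, show (q' * b + r' * c) + Lval n b c * n
        = (q' * b + r' * c) + n * Lval n b c from by ring,
        Nat.add_mul_mod_self_left]
    have hmin := Afun_min (⟨_, _, rfl⟩ : (q' * b + r' * c) ∈ numSg b c) hymod
    linarith

/-- degenerate case: the candidate value is a class minimum -/
lemma deg_lower {n b c L : ℕ} (hn : 0 < n) (hb : 0 < b) (hc : 0 < c) (hbc : b + c ≤ b * c)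
    (hL1pos : 0 < L)
    (ρ σ : ℕ) (hσ1 : 1 ≤ σ) (hρ1 : 1 ≤ ρ)
    (hrep : L * n = ρ * b + σ * c)
    (minL1 : ∀ k : ℕ, 0 < k → k < L → k * n ∉ numSg b c)
    (min2 : ∀ k : ℕ, 0 < k → k < c → k * b ∉ numSg n c)
    (min3 : ∀ k : ℕ, 0 < k → k < b → k * c ∉ numSg n b) :
    (L * n + b * c - b - c) ∈ numSg b c ∧
      ∀ y ∈ numSg b c, y % n = (L * n + b * c - b - c) % n →
        L * n + b * c - b - c ≤ y := by
  have hrep' : ((L : ℤ)) * n = ρ * b + σ * c := by exact_mod_cast hrep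
  have hb' : (0:ℤ) < b := by exact_mod_cast hb
  have hc' : (0:ℤ) < c := by exact_mod_cast hc
  have hσb : b ≤ ρ * b + σ * c := by
    have : b ≤ ρ * b := Nat.le_mul_of_pos_left b hρ1
    omega
  have hWcast : ((L * n + b * c - b - c : ℕ) : ℤ)
      = (L : ℤ) * n + b * c - b - c := by
    have h1 : b + c ≤ L * n + b * c := by
      have : b + c ≤ b * c := hbc
      omega
    omega
  constructor
  · refine ⟨ρ - 1, σ - 1 + b, ?_⟩
    zify [hρ1, hσ1]
    rw [hWcast]
    linear_combination hrep'
  · intro y hy hmod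
    by_contra hlt; push_neg at hlt
    obtain ⟨q, r, hq, hyrep⟩ := exists_rep_small hc hy
    have hy' : (y:ℤ) = q * b + r * c := by exact_mod_cast hyrep
    have hdvd : (n:ℤ) ∣ ((L * n + b * c - b - c : ℕ) : ℤ) - y := by
      have h0 : n ∣ (L * n + b * c - b - c) - y := (Nat.modEq_iff_dvd' hlt.le).1 hmod
      have := Int.natCast_dvd_natCast.2 h0
      rwa [Nat.cast_sub hlt.le] at this
    obtain ⟨k, hk⟩ := hdvd
    rw [hWcast] at hk
    have hn' : (0:ℤ) < n := by exact_mod_cast hn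
    have hk1 : 1 ≤ k := by
      have h2 : (y:ℤ) < ((L * n + b * c - b - c : ℕ) : ℤ) := by exact_mod_cast hlt
      rw [hWcast] at h2
      have hkn : (0:ℤ) < k * n := by rw [mul_comm]; linarith
      have := int_pos_of_mul hkn hn'
      linarith
    have base : (q:ℤ) * b + r * c + n * k = (L : ℤ) * n + b * c - b - c := by
      linear_combination -hy' - hk
    have hq' : (q:ℤ) < c := by exact_mod_cast hq
    have hL1' : (1:ℤ) ≤ (L : ℤ) := by exact_mod_cast hL1pos
    rcases eq_or_lt_of_le (show (0:ℤ) ≤ (c:ℤ) - 1 - q by linarith) with hs0 | hs1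
    · -- q = c - 1 : (r+1)*c + n*k = L1*n
      have base2 : ((r:ℤ) + 1) * c + n * k = (L : ℤ) * n := by
        linear_combination base - b * hs0
      have hkL1 : k < (L : ℤ) := by
        by_contra hge; push_neg at hge
        have e1 : (L : ℤ) * n ≤ k * n := mul_le_mul_of_nonneg_right hge hn'.le
        have e2 : (c:ℤ) ≤ ((r:ℤ)+1)*c := le_mul_of_one_le_left hc'.le (by linarith [hq'])
        linarith [e1, e2, base2, hc']
      have hkN : k.toNat < L := by omega
      refine minL1 (L - k.toNat) (by omega) (by omega) ?_
      refine mem_numSg_of_int (p := 0) (q := (r:ℤ) + 1) le_rfl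
        (by linarith [show (0:ℤ) ≤ r from by positivity]) ?_
      have e : ((L - k.toNat : ℕ) : ℤ) = (L : ℤ) - k := by omega
      push_cast [e]
      linear_combination -base2
    · rcases le_or_gt (L : ℤ) k with hge | hltk
      · -- k ≥ L1 : s * b = (k - L1) * n + (r+1) * c , contradicts min2
        refine min2 (c - 1 - q) (by omega) (by omega) ?_
        refine mem_numSg_of_int (p := k - (L : ℤ)) (q := (r:ℤ) + 1)
          (by linarith) (by linarith [show (0:ℤ) ≤ r from by positivity]) ?_
        have e : ((c - 1 - q : ℕ) : ℤ) = (c:ℤ) - 1 - q := by omega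
        push_cast [e]
        linear_combination -base
      · rcases lt_or_ge (r + 1) b with hrb | hrb
        · -- r + 1 < b : (r+1)*c = (L1 - k)*n + s*b , contradicts min3
          refine min3 (r + 1) (by omega) hrb ?_
          refine mem_numSg_of_int (p := (L : ℤ) - k) (q := (c:ℤ) - 1 - q)
            (by linarith) (by linarith) ?_
          push_cast
          linear_combination base
        · -- r + 1 ≥ b : (L1 - k)*n = (q+1)*b + (r+1-b)*c
          have hkN : k.toNat < L := by omega
          refine minL1 (L - k.toNat) (by omega) (by omega) ?_
          have hrb' : (b:ℤ) ≤ (r:ℤ) + 1 := by exact_mod_cast hrb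
          refine mem_numSg_of_int (p := (q:ℤ) + 1) (q := (r:ℤ) + 1 - b)
            (by linarith [show (0:ℤ) ≤ q from by positivity]) (by linarith) ?_
          have e : ((L - k.toNat : ℕ) : ℤ) = (L : ℤ) - k := by omega
          push_cast [e]
          linear_combination -base

/-- degeneracy propagates between the two generators -/
lemma deg_propagate {n b c : ℕ} (hbn : b < n) (hb : 0 < b) (hc : 0 < c)
    (cop_nc : Nat.Coprime n c) (cop_bc : Nat.Coprime b c)
    (hmin2 : ∀ k : ℕ, 0 < k → k < c → k * b ∉ numSg n c) :
    ∀ k : ℕ, 0 < k → k < b → k * c ∉ numSg n b := by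
  intro k hk hkb ⟨p, q, hpq⟩
  have hp : 0 < p := by
    rcases Nat.eq_zero_or_pos p with h0 | h; swap; exact h
    exfalso
    rw [h0] at hpq; simp at hpq
    have hd : b ∣ k * c := ⟨q, by rw [hpq]; ring⟩
    have := Nat.le_of_dvd hk (cop_bc.dvd_of_dvd_mul_right hd)
    omega
  have hq : 0 < q := by
    rcases Nat.eq_zero_or_pos q with h0 | h; swap; exact h
    exfalso
    rw [h0] at hpq; simp at hpq
    have hd : n ∣ k * c := ⟨p, by rw [hpq]; ring⟩
    have := Nat.le_of_dvd hk (cop_nc.dvd_of_dvd_mul_right hd)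
    omega
  have hqc : q < c := by
    by_contra hge; push_neg at hge
    have e1 : k * c ≤ (b-1) * c := Nat.mul_le_mul_right _ (by omega)
    have e2 : c * b ≤ q * b := Nat.mul_le_mul_right _ hge
    have e3 : (b-1) * c < c * b := by
      have : (b-1) * c < b * c := (Nat.mul_lt_mul_right hc).2 (by omega)
      linarith [Nat.mul_comm b c]
    have e4 : n ≤ p * n := Nat.le_mul_of_pos_left n hp
    linarith
  refine hmin2 (c - q) (by omega) (by omega) ⟨p, b - k, ?_⟩
  have hpq' : (k:ℤ) * c = p * n + q * b := by exact_mod_cast hpq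
  zify [hqc.le, hkb.le]
  linear_combination hpq'

lemma cast_sub2 {X b c : ℕ} (h : b + c ≤ X) : ((X - b - c : ℕ) : ℤ) = (X:ℤ) - b - c := by
  omega

/-- Theorem 9: for pairwise coprime `a₁ > a₂ > a₃ > 1`,
`g(a₁,a₂,a₃) = L₁a₁ + max{[L₂a₂a₃⁻¹]_{a₁}a₃, [L₃a₃a₂⁻¹]_{a₁}a₂} − a₁ − a₂ − a₃`. -/
theorem stmt9 (a₁ a₂ a₃ : ℕ)
    (h12 : Nat.Coprime a₁ a₂) (h13 : Nat.Coprime a₁ a₃) (h23 : Nat.Coprime a₂ a₃)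
    (hgt : a₁ > a₂ ∧ a₂ > a₃ ∧ a₃ > 1)
    (g : ℕ) (hg : IsGreatest {n : ℕ | n ∉ numSg3 a₁ a₂ a₃} g) :
    (g : ℤ) = Lval a₁ a₂ a₃ * a₁ +
        (max (((Lval a₂ a₁ a₃ * a₂ * modInv a₃ a₁) % a₁) * a₃)
             (((Lval a₃ a₁ a₂ * a₃ * modInv a₂ a₁) % a₁) * a₂) : ℕ)
        - a₁ - a₂ - a₃ := by

  obtain ⟨hgt1, hgt2, hgt3⟩ := hgt
  have hn : 0 < a₁ := by omega
  have hb : 0 < a₂ := by omega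
  have hc : 0 < a₃ := by omega
  haveI : NeZero a₁ := ⟨by omega⟩
  set L1 := Lval a₁ a₂ a₃ with hL1def
  set L2 := Lval a₂ a₁ a₃ with hL2def
  set L3 := Lval a₃ a₁ a₂ with hL3def
  set x2 := (L2 * a₂ * modInv a₃ a₁) % a₁ with hx2def
  set x3 := (L3 * a₃ * modInv a₂ a₁) % a₁ with hx3def
  obtain ⟨⟨hL1pos, hL1mem⟩, hL1le⟩ :=
    Lval_mem (a := a₁) (b := a₂) (c := a₃) (x := a₃) hc ⟨0, a₁, by ring⟩
  obtain ⟨⟨hL2pos, hL2mem⟩, hL2le⟩ :=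
    Lval_mem (a := a₂) (b := a₁) (c := a₃) (x := a₃) hc ⟨0, a₂, by ring⟩
  obtain ⟨⟨hL3pos, hL3mem⟩, hL3le⟩ :=
    Lval_mem (a := a₃) (b := a₁) (c := a₂) (x := a₂) hb ⟨0, a₃, by ring⟩
  rw [← hL1def] at hL1le hL1pos hL1mem
  rw [← hL2def] at hL2le hL2pos hL2mem
  rw [← hL3def] at hL3le hL3pos hL3mem
  have hx2lt : x2 < a₁ := Nat.mod_lt _ hn
  have hx3lt : x3 < a₁ := Nat.mod_lt _ hn
  have hx2cong : x2 * a₃ ≡ L2 * a₂ [MOD a₁] := modinv_solve a₁ (L2 * a₂) a₃ h13.symm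
  have hx3cong : x3 * a₂ ≡ L3 * a₃ [MOD a₁] := modinv_solve a₁ (L3 * a₃) a₂ h12.symm
  obtain ⟨u2, hu2eq⟩ := exists_u h13 hx2lt hx2cong hL2mem
  obtain ⟨u3, hu3eq⟩ := exists_u h12 hx3lt hx3cong hL3mem
  have hx2pos : 0 < x2 := by
    rcases Nat.eq_zero_or_pos x2 with h0 | h
    · exfalso
      rw [h0] at hu2eq; simp at hu2eq
      have hd : a₁ ∣ L2 * a₂ := ⟨u2, by rw [hu2eq]; ring⟩
      have := Nat.le_of_dvd hL2pos (h12.dvd_of_dvd_mul_right hd)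
      omega
    · exact h
  have hx3pos : 0 < x3 := by
    rcases Nat.eq_zero_or_pos x3 with h0 | h
    · exfalso
      rw [h0] at hu3eq; simp at hu3eq
      have hd : a₁ ∣ L3 * a₃ := ⟨u3, by rw [hu3eq]; ring⟩
      have := Nat.le_of_dvd hL3pos (h13.dvd_of_dvd_mul_right hd)
      omega
    · exact h
  have minL2 : ∀ k : ℕ, 0 < k → k < L2 → k * a₂ ∉ numSg a₁ a₃ := fun k hk hlt => Lval_min hk hlt
  have minL3 : ∀ k : ℕ, 0 < k → k < L3 → k * a₃ ∉ numSg a₁ a₂ := fun k hk hlt => Lval_min hk hlt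
  have minL1 : ∀ k : ℕ, 0 < k → k < L1 → k * a₁ ∉ numSg a₂ a₃ := fun k hk hlt => Lval_min hk hlt
  rcases eq_or_lt_of_le hL2le with hdeg | hL2lt
  · -- degenerate case : L2 = a₃
    have hx2a2 : x2 = a₂ := by
      have h1 : x2 * a₃ ≡ a₂ * a₃ [MOD a₁] := by
        rw [hdeg] at hx2cong
        rwa [Nat.mul_comm a₃ a₂] at hx2cong
      have h2 : x2 ≡ a₂ [MOD a₁] :=
        Nat.ModEq.cancel_right_of_coprime (by simpa [Nat.Coprime] using h13) h1
      have h3 := h2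
      unfold Nat.ModEq at h3
      rwa [Nat.mod_eq_of_lt hx2lt, Nat.mod_eq_of_lt hgt1] at h3
    have min2' : ∀ k : ℕ, 0 < k → k < a₃ → k * a₂ ∉ numSg a₁ a₃ :=
      fun k hk hlt => minL2 k hk (by omega)
    have min3' : ∀ k : ℕ, 0 < k → k < a₂ → k * a₃ ∉ numSg a₁ a₂ :=
      deg_propagate hgt1 hb hc h13 h23 min2'
    have hL3a2 : L3 = a₂ := by
      by_contra hne
      exact min3' L3 hL3pos (by omega) hL3mem
    have hx3a3 : x3 = a₃ := by
      have h1 : x3 * a₂ ≡ a₃ * a₂ [MOD a₁] := by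
        rw [hL3a2] at hx3cong
        rwa [Nat.mul_comm a₂ a₃] at hx3cong
      have h2 : x3 ≡ a₃ [MOD a₁] :=
        Nat.ModEq.cancel_right_of_coprime (by simpa [Nat.Coprime] using h12) h1
      have h3 := h2
      unfold Nat.ModEq at h3
      rwa [Nat.mod_eq_of_lt hx3lt, Nat.mod_eq_of_lt (by omega)] at h3
    have hbc : a₂ + a₃ ≤ a₂ * a₃ := by
      have h2 := Nat.mul_le_mul_left a₂ (show 2 ≤ a₃ by omega)
      linarith
    obtain ⟨σ, ρ, hσlt, hrepl⟩ :=
      exists_rep_small (b := a₃) (c := a₂) hb (by rw [numSg_comm]; exact hL1mem)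
    have hrep : L1 * a₁ = ρ * a₂ + σ * a₃ := by rw [hrepl]; ring
    have hσ1 : 1 ≤ σ := by
      rcases Nat.eq_zero_or_pos σ with h0 | h
      · exfalso
        rw [h0] at hrep; simp at hrep
        have hd : a₂ ∣ L1 * a₁ := ⟨ρ, by rw [hrep]; ring⟩
        have := Nat.le_of_dvd hL1pos (h12.symm.dvd_of_dvd_mul_right hd)
        omega
      · exact h
    have hρ1 : 1 ≤ ρ := by
      rcases Nat.eq_zero_or_pos ρ with h0 | h
      · exfalso
        rw [h0] at hrep; simp at hrep
        have hd : a₃ ∣ L1 * a₁ := ⟨σ, by rw [hrep]; ring⟩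
        have hdL1 := h13.symm.dvd_of_dvd_mul_right hd
        have hL1a3 : L1 = a₃ := by
          have := Nat.le_of_dvd hL1pos hdL1
          omega
        rw [hL1a3] at hrep
        have hσa1 : σ = a₁ :=
          Nat.eq_of_mul_eq_mul_left hc (by rw [Nat.mul_comm a₃ σ, ← hrep])
        omega
      · exact h
    obtain ⟨hWmem, hWmin⟩ := deg_lower hn hb hc hbc hL1pos ρ σ hσ1 hρ1 hrep minL1 min2' min3'
    have hK1 : Afun a₁ a₂ a₃ ((L1 * a₁ + a₂ * a₃ - a₂ - a₃) % a₁)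
        = L1 * a₁ + a₂ * a₃ - a₂ - a₃ := by
      have hle := Afun_min (n := a₁) hWmem rfl
      obtain ⟨hAm, hAmod⟩ :=
        Afun_spec a₁ a₂ a₃ ((L1 * a₁ + a₂ * a₃ - a₂ - a₃) % a₁) h12.symm (Nat.mod_lt _ hn)
      have hge := hWmin _ hAm hAmod
      omega
    have hK2 : ∀ i, i < a₁ → Afun a₁ a₂ a₃ i ≤ L1 * a₁ + a₂ * a₃ - a₂ - a₃ := by
      intro i hi
      obtain ⟨ρu, σu, hρu, hrepu⟩ := exists_rep_small (b := a₂) (c := a₃) hc hL1mem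
      have h := deg_upper h12.symm hb hc hL1pos ρu σu hρu hrepu i hi
      rw [Nat.sub_sub]
      exact Nat.le_sub_of_add_le (by linarith)
    have hgK := final h12.symm hK1 hK2 g hg
    rw [hx2a2, hx3a3, Nat.mul_comm a₃ a₂, max_self]
    have hble : a₂ + a₃ ≤ L1 * a₁ + a₂ * a₃ := by
      have := Nat.zero_le (L1 * a₁)
      linarith
    have e := cast_sub2 (X := L1 * a₁ + a₂ * a₃) hble
    push_cast at e hgK ⊢
    linarith
  · -- nondegenerate case : L2 < a₃
    have hu2pos : 0 < u2 := by
      rcases Nat.eq_zero_or_pos u2 with h0 | h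
      · exfalso
        rw [h0] at hu2eq; simp at hu2eq
        have hd : a₃ ∣ L2 * a₂ := ⟨x2, by rw [hu2eq]; ring⟩
        have := Nat.le_of_dvd hL2pos (h23.symm.dvd_of_dvd_mul_right hd)
        omega
      · exact h
    have hL3lt : L3 < a₂ := by
      rcases eq_or_lt_of_le hL3le with h0 | h
      · exfalso
        have min3'' : ∀ k : ℕ, 0 < k → k < a₂ → k * a₃ ∉ numSg a₁ a₂ :=
          fun k hk hlt => minL3 k hk (by omega)
        have prop := deg_propagate (b := a₃) (c := a₂) (by omega) hc hb h12 h23.symm min3''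
        exact prop L2 hL2pos hL2lt hL2mem
      · exact h
    have hu3pos : 0 < u3 := by
      rcases Nat.eq_zero_or_pos u3 with h0 | h
      · exfalso
        rw [h0] at hu3eq; simp at hu3eq
        have hd : a₂ ∣ L3 * a₃ := ⟨x3, by rw [hu3eq]; ring⟩
        have := Nat.le_of_dvd hL3pos (h23.dvd_of_dvd_mul_right hd)
        omega
      · exact h
    have hx2L3 : x2 < L3 := x_lt_L hb hn hu2eq hu3eq (by omega) hx3pos minL2
    have hx3L2 : x3 < L2 := x_lt_L hc hn hu3eq hu2eq (by omega) hx2pos minL3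
    have hV2 := corner_Afun hb hc hgt1 hL3lt.le h12.symm h13 hu2eq hu3eq
      hu2pos hu3pos hx2pos hL2pos hx2L3 minL2 minL3
    have hV3 := corner_Afun hc hb (by omega) hL2lt.le h13.symm h12 hu3eq hu2eq
      hu3pos hu2pos hx3pos hL3pos hx3L2 minL3 minL2
    rw [Nat.add_comm ((L3-1)*a₃) ((L2-x3-1)*a₂)] at hV3
    rw [← Afun_comm] at hV3
    have Vmin2 : ∀ y ∈ numSg a₂ a₃, y % a₁ = ((L2-1)*a₂ + (L3-x2-1)*a₃) % a₁ →
        (L2-1)*a₂ + (L3-x2-1)*a₃ ≤ y := by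
      intro y hy hm
      rw [← hV2]; exact Afun_min hy hm
    have Vmin3 : ∀ y ∈ numSg a₂ a₃, y % a₁ = ((L2-x3-1)*a₂ + (L3-1)*a₃) % a₁ →
        (L2-x3-1)*a₂ + (L3-1)*a₃ ≤ y := by
      intro y hy hm
      rw [← hV3]; exact Afun_min hy hm
    have hL1eq : L1 = u2 + u3 :=
      L1_eq hn hc hb hx2pos hx3pos hu2pos hu3pos hx2L3 hx3L2 hu2eq hu3eq Vmin2 Vmin3
    have hK1 : Afun a₁ a₂ a₃
        ((max ((L2-1)*a₂ + (L3-x2-1)*a₃) ((L2-x3-1)*a₂ + (L3-1)*a₃)) % a₁)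
        = max ((L2-1)*a₂ + (L3-x2-1)*a₃) ((L2-x3-1)*a₂ + (L3-1)*a₃) := by
      rcases max_choice ((L2-1)*a₂ + (L3-x2-1)*a₃) ((L2-x3-1)*a₂ + (L3-1)*a₃) with h | h <;>
        rw [h]
      · exact hV2
      · exact hV3
    have hK2 := fun i hi => upper_nondeg h12.symm hu2eq hu3eq hu2pos hu3pos hx2L3 hx3L2 i hi
    have hgK := final h12.symm hK1 hK2 g hg
    have hu2' : (L2:ℤ) * a₂ = u2 * a₁ + x2 * a₃ := by exact_mod_cast hu2eq
    have hu3' : (L3:ℤ) * a₃ = u3 * a₁ + x3 * a₂ := by exact_mod_cast hu3eq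
    have e1 : ((L2 - 1 : ℕ) : ℤ) = (L2:ℤ) - 1 := by omega
    have e2 : ((L3 - x2 - 1 : ℕ) : ℤ) = (L3:ℤ) - x2 - 1 := by omega
    have e3 : ((L2 - x3 - 1 : ℕ) : ℤ) = (L2:ℤ) - x3 - 1 := by omega
    have e4 : ((L3 - 1 : ℕ) : ℤ) = (L3:ℤ) - 1 := by omega
    have hV2c : (((L2-1)*a₂ + (L3-x2-1)*a₃ : ℕ) : ℤ)
        = ((u2:ℤ) + u3) * a₁ + x3 * a₂ - a₂ - a₃ := by
      push_cast [e1, e2]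
      linear_combination hu2' + hu3'
    have hV3c : (((L2-x3-1)*a₂ + (L3-1)*a₃ : ℕ) : ℤ)
        = ((u2:ℤ) + u3) * a₁ + x2 * a₃ - a₂ - a₃ := by
      push_cast [e3, e4]
      linear_combination hu2' + hu3'
    rcases le_total (x2 * a₃) (x3 * a₂) with hmx | hmx
    · rw [max_eq_right hmx]
      have hVle : (L2-x3-1)*a₂ + (L3-1)*a₃ ≤ (L2-1)*a₂ + (L3-x2-1)*a₃ := by
        have hmx' : (x2:ℤ) * a₃ ≤ (x3:ℤ) * a₂ := by exact_mod_cast hmx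
        have : ((((L2-x3-1)*a₂ + (L3-1)*a₃ : ℕ)) : ℤ)
            ≤ (((L2-1)*a₂ + (L3-x2-1)*a₃ : ℕ) : ℤ) := by
          rw [hV2c, hV3c]; linarith
        exact_mod_cast this
      rw [max_eq_left hVle] at hgK
      rw [hgK, hV2c, hL1eq]
      push_cast
      ring
    · rw [max_eq_left hmx]
      have hVle : (L2-1)*a₂ + (L3-x2-1)*a₃ ≤ (L2-x3-1)*a₂ + (L3-1)*a₃ := by
        have hmx' : (x3:ℤ) * a₂ ≤ (x2:ℤ) * a₃ := by exact_mod_cast hmx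
        have : ((((L2-1)*a₂ + (L3-x2-1)*a₃ : ℕ)) : ℤ)
            ≤ (((L2-x3-1)*a₂ + (L3-1)*a₃ : ℕ) : ℤ) := by
          rw [hV2c, hV3c]; linarith
        exact_mod_cast this
      rw [max_eq_right hVle] at hgK
      rw [hgK, hV3c, hL1eq]
      push_cast
      ring
end

section
/- Let a₁,a₂,a₃ be pairwise coprime positive integers with a₁ > a₂ > a₃ > 1, and suppose L₁ = 2. Then for every {j,k} = {2,3} (i.e. for (j,k) = (2,3) and (j,k) = (3,2)), one has [L_j·a_j·a₁⁻¹]_{a_k} = 1. -/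
lemma Lval_le {a b c x : ℕ} (hx : 0 < x) (hxa : x * a ∈ numSg b c) : Lval a b c ≤ x :=
  Nat.sInf_le ⟨hx, hxa⟩

lemma Lval_pos_and_mem {a b c : ℕ} (hc : 0 < c) :
    0 < Lval a b c ∧ Lval a b c * a ∈ numSg b c :=
  Nat.sInf_mem (s := {x | 0 < x ∧ x * a ∈ numSg b c}) ⟨c, hc, 0, a, by ring⟩

lemma not_mem_numSg_of_Lval_ne_one {a b c : ℕ} (h : Lval a b c ≠ 1) (hpos : 0 < Lval a b c) :
    a ∉ numSg b c :=
  fun ha ↦ h (le_antisymm (Lval_le one_pos (by simpa using ha)) hpos)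

lemma Lval_lt_of_not_mem_numSg {a b c : ℕ} (hac : Nat.Coprime a c) (hbc : Nat.Coprime b c)
    (hc : 1 < c) (ha : a ∉ numSg b c) : Lval b a c < c := by
  have : NeZero c := ⟨by omega⟩
  set x := ((a : ZMod c) * (b : ZMod c)⁻¹).val
  have hxb : ((x * b : ℕ) : ZMod c) = a := by
    rw [Nat.cast_mul, ZMod.natCast_zmod_val, mul_assoc, mul_comm _ (b : ZMod c),
      ZMod.coe_mul_inv_eq_one b hbc, mul_one]
  have hx : 0 < x := by
    refine Nat.pos_of_ne_zero fun hx0 ↦ ?_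
    rw [hx0, zero_mul, Nat.cast_zero, eq_comm, ZMod.natCast_eq_zero_iff] at hxb
    exact absurd (Nat.Coprime.eq_one_of_dvd hac.symm hxb) (by omega)
  have hmod : a ≡ x * b [MOD c] := (ZMod.natCast_eq_natCast_iff _ _ _).mp hxb.symm
  have hax : a ≤ x * b := by
    by_contra! hlt
    obtain ⟨t, ht⟩ := (Nat.modEq_iff_dvd' hlt.le).mp hmod.symm
    exact ha ⟨x, t, by rw [mul_comm t]; omega⟩
  obtain ⟨t, ht⟩ := (Nat.modEq_iff_dvd' hax).mp hmod
  calc Lval b a c ≤ x := Lval_le hx ⟨1, t, by rw [mul_comm t]; omega⟩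
    _ < c := ZMod.val_lt _

lemma coeff_lt_of_Lval_mul_eq {a b c m p q u v : ℕ} (hc : 0 < c) (hp : 0 < p) (hq : 0 < q)
    (hm : m * a = p * b + q * c) (huv : Lval b a c * b = u * a + v * c) : u < m := by
  by_contra! hmu
  have hpL : p < Lval b a c := by
    refine Nat.lt_of_mul_lt_mul_right (a := b) ?_
    nlinarith [Nat.mul_le_mul_right a hmu, Nat.mul_pos hq hc]
  have hrep : (Lval b a c - p) * b = (u - m) * a + (v + q) * c := by
    have huvZ : ((Lval b a c : ℕ) : ℤ) * b = u * a + v * c := by exact_mod_cast huv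
    have hmZ : (m : ℤ) * a = p * b + q * c := by exact_mod_cast hm
    zify [hpL.le, hmu]
    linear_combination huvZ + hmZ
  have := Lval_le (by omega) ⟨u - m, v + q, hrep⟩
  omega

lemma Lval_mul_mod_eq {a b c p q : ℕ} (hac : Nat.Coprime a c) (hbc : Nat.Coprime b c)
    (hc : 1 < c) (ha : a ∉ numSg b c) (hp : 0 < p) (hq : 0 < q)
    (h2 : 2 * a = p * b + q * c) : Lval b a c * b % c = a % c := by
  obtain ⟨hLpos, u, v, huv⟩ := Lval_pos_and_mem (a := b) (b := a) (by omega : 0 < c)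
  have hu2 := coeff_lt_of_Lval_mul_eq (by omega) hp hq h2 huv
  have hu0 : u ≠ 0 := by
    rintro rfl
    have hcL : c ∣ Lval b a c :=
      hbc.symm.dvd_of_dvd_mul_right ⟨v, by rw [huv]; ring⟩
    have := Lval_lt_of_not_mem_numSg hac hbc hc ha
    exact absurd (Nat.le_of_dvd hLpos hcL) (by omega)
  obtain rfl : u = 1 := by omega
  rw [huv, one_mul, Nat.add_mul_mod_self_right]

lemma coeff_pos_of_two_mul_eq {a b c p q : ℕ} (hac : Nat.Coprime a c) (hbc : Nat.Coprime b c)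
    (hba : b < a) (hc : 1 < c) (ha : a ∉ numSg b c) (h2 : 2 * a = p * b + q * c) : 0 < p := by
  refine Nat.pos_of_ne_zero fun hp ↦ ?_
  have hc2 : c ∣ 2 := hac.symm.dvd_of_dvd_mul_right ⟨q, by rw [h2, hp]; ring⟩
  obtain rfl : c = 2 := by have := Nat.le_of_dvd two_pos hc2; omega
  obtain ⟨k, hk⟩ := Nat.coprime_two_right.mp hac
  obtain ⟨l, hl⟩ := Nat.coprime_two_right.mp hbc
  exact ha ⟨1, k - l, by omega⟩

lemma mul_modInv_mod_eq_one {a c n : ℕ} (hac : Nat.Coprime a c) (hc : 1 < c)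
    (h : n % c = a % c) : n * modInv a c % c = 1 := by
  have : Fact (1 < c) := ⟨hc⟩
  have hn : (n : ZMod c) = a := (ZMod.natCast_eq_natCast_iff' _ _ _).mpr h
  have hone : ((n * modInv a c : ℕ) : ZMod c) = 1 := by
    rw [Nat.cast_mul, modInv, ZMod.natCast_zmod_val, hn, ZMod.coe_mul_inv_eq_one a hac]
  rw [← ZMod.val_natCast, hone, ZMod.val_one]

/-- Lemma 8(1): for pairwise coprime `a₁ > a₂ > a₃ > 1` with `L₁ = 2`, for
each `{j,k} = {2,3}` one has `[L_j·a_j·a₁⁻¹]_{a_k} = 1`. -/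
theorem stmt10 (a₁ a₂ a₃ : ℕ)
    (h12 : Nat.Coprime a₁ a₂) (h13 : Nat.Coprime a₁ a₃) (h23 : Nat.Coprime a₂ a₃)
    (hgt : a₁ > a₂ ∧ a₂ > a₃ ∧ a₃ > 1)
    (hL₁ : Lval a₁ a₂ a₃ = 2) :
    (Lval a₂ a₁ a₃ * a₂ * modInv a₁ a₃) % a₃ = 1 ∧
    (Lval a₃ a₁ a₂ * a₃ * modInv a₁ a₂) % a₂ = 1 := by
  obtain ⟨hg1, hg2, hg3⟩ := hgt
  obtain ⟨-, p, q, hpq⟩ := hL₁ ▸ Lval_pos_and_mem (a := a₁) (b := a₂) (by omega : 0 < a₃)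
  have ha₁ : a₁ ∉ numSg a₂ a₃ := not_mem_numSg_of_Lval_ne_one (by omega) (by omega)
  have ha₁' : a₁ ∉ numSg a₃ a₂ := numSg_comm a₂ a₃ ▸ ha₁
  have hqp : 2 * a₁ = q * a₃ + p * a₂ := by omega
  have hp := coeff_pos_of_two_mul_eq h13 h23 hg1 hg3 ha₁ hpq
  have hq := coeff_pos_of_two_mul_eq h12 h23.symm (by omega) (by omega) ha₁' hqp
  exact ⟨mul_modInv_mod_eq_one h13 hg3 (Lval_mul_mod_eq h13 h23 hg3 ha₁ hp hq hpq),
    mul_modInv_mod_eq_one h12 (by omega) (Lval_mul_mod_eq h12 h23.symm (by omega) ha₁' hq hp hqp)⟩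
end

section
/- Let a₁,a₂,a₃ be pairwise coprime positive integers with a₁ > a₂ > a₃ > 1, and suppose L₁ > 1. Then for every {j,k} = {2,3} (i.e. for (j,k) = (2,3) and (j,k) = (3,2)), one has [L_j·a_j·a₁⁻¹]_{a_k} > 0; equivalently, L_j < a_k. -/
lemma Lval_comm (a b c : ℕ) : Lval a b c = Lval a c b := by
  unfold Lval
  rw [numSg_comm]

/-- Key lemma: `Lval b a c < c` under the hypotheses. -/
lemma Lval_lt (a b c : ℕ) (hac : Nat.Coprime a c) (hbc : Nat.Coprime b c)
    (hc : 1 < c) (hL : 1 < Lval a b c) : Lval b a c < c := by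
  haveI : NeZero c := ⟨by omega⟩
  -- x = [a * b⁻¹] mod c
  set xz : ZMod c := (a : ZMod c) * (b : ZMod c)⁻¹ with hxz
  set x : ℕ := xz.val with hx
  have hxlt : x < c := ZMod.val_lt xz
  have hbu : IsUnit (b : ZMod c) := (ZMod.isUnit_iff_coprime b c).mpr hbc
  have hcast : (x : ZMod c) = xz := by rw [hx, ZMod.natCast_val, ZMod.cast_id]
  have hxb : ((x * b : ℕ) : ZMod c) = (a : ZMod c) := by
    push_cast
    rw [hcast, hxz, mul_assoc, ZMod.inv_mul_of_unit _ hbu, mul_one]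
  have hmodeq : x * b ≡ a [MOD c] := (ZMod.natCast_eq_natCast_iff _ _ _).mp hxb
  have hx0 : 0 < x := by
    rcases Nat.eq_zero_or_pos x with h0 | h
    · exfalso
      have : (0 : ℕ) ≡ a [MOD c] := by simpa [h0] using hmodeq
      have hdvd : c ∣ a := (Nat.modEq_zero_iff_dvd).mp this.symm
      have h1 : c ∣ 1 := hac ▸ Nat.dvd_gcd hdvd dvd_rfl
      have := Nat.le_of_dvd one_pos h1
      omega
    · exact h
  by_cases hge : a ≤ x * b
  · -- x * b ∈ ⟨a, c⟩, so Lval b a c ≤ x < c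
    have hdvd : c ∣ x * b - a := (Nat.modEq_iff_dvd' hge).mp hmodeq.symm
    obtain ⟨t, ht⟩ := hdvd
    have hmem : x ∈ {y : ℕ | 0 < y ∧ y * b ∈ numSg a c} := by
      refine ⟨hx0, 1, t, ?_⟩
      rw [one_mul, mul_comm t c]
      omega
    calc Lval b a c ≤ x := Nat.sInf_le hmem
      _ < c := hxlt
  · -- a = x*b + t*c ∈ ⟨b, c⟩, contradicting Lval a b c > 1
    push_neg at hge
    have hdvd : c ∣ a - x * b := (Nat.modEq_iff_dvd' (le_of_lt hge)).mp hmodeq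
    obtain ⟨t, ht⟩ := hdvd
    exfalso
    have hmem : (1 : ℕ) ∈ {y : ℕ | 0 < y ∧ y * a ∈ numSg b c} := by
      refine ⟨one_pos, x, t, ?_⟩
      rw [one_mul, mul_comm t c]
      omega
    have := Nat.sInf_le hmem
    unfold Lval at hL
    omega

/-- Positivity of `Lval b a c`. -/
lemma Lval_pos (a b c : ℕ) (hc : 0 < c) : 0 < Lval b a c := by
  have hmem : c ∈ {y : ℕ | 0 < y ∧ y * b ∈ numSg a c} := ⟨hc, 0, b, by ring⟩
  have hne : {y : ℕ | 0 < y ∧ y * b ∈ numSg a c}.Nonempty := ⟨c, hmem⟩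
  have := Nat.sInf_mem hne
  exact this.1

/-- The mod expression is positive when `0 < L < c`. -/
lemma mod_pos (L a b c : ℕ) (hL0 : 0 < L) (hLc : L < c)
    (hbc : Nat.Coprime b c) (hac : Nat.Coprime a c) (hc : 1 < c) :
    0 < (L * b * modInv a c) % c := by
  haveI : NeZero c := ⟨by omega⟩
  by_contra h
  push_neg at h
  have h0 : (L * b * modInv a c) % c = 0 := by omega
  have hdvd : c ∣ L * b * modInv a c := Nat.dvd_of_mod_eq_zero h0
  have hz : ((L * b * modInv a c : ℕ) : ZMod c) = 0 := by
    exact_mod_cast (ZMod.natCast_eq_zero_iff _ _).mpr hdvd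
  have hau : IsUnit (a : ZMod c) := (ZMod.isUnit_iff_coprime a c).mpr hac
  have hinv : ((modInv a c : ℕ) : ZMod c) = (a : ZMod c)⁻¹ := by
    unfold modInv; rw [ZMod.natCast_val, ZMod.cast_id]
  have : ((L * b : ℕ) : ZMod c) = 0 := by
    have := congrArg (· * (a : ZMod c)) hz
    simp only [zero_mul] at this
    push_cast at this
    rw [hinv, mul_assoc, ZMod.inv_mul_of_unit _ hau, mul_one] at this
    push_cast
    exact this
  have hdvd2 : c ∣ L * b := (ZMod.natCast_eq_zero_iff _ _).mp this
  have hdvdL : c ∣ L := (Nat.Coprime.dvd_of_dvd_mul_right hbc.symm) hdvd2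
  have := Nat.le_of_dvd hL0 hdvdL
  omega

/-- For pairwise coprime `a₁ > a₂ > a₃ > 1` with `L₁ > 1`, for each
`{j,k} = {2,3}` one has `[L_j·a_j·a₁⁻¹]_{a_k} > 0`, equivalently `L_j < a_k`. -/
theorem stmt16 (a₁ a₂ a₃ : ℕ)
    (h12 : Nat.Coprime a₁ a₂) (h13 : Nat.Coprime a₁ a₃) (h23 : Nat.Coprime a₂ a₃)
    (hgt : a₁ > a₂ ∧ a₂ > a₃ ∧ a₃ > 1)
    (hL₁ : 1 < Lval a₁ a₂ a₃) :
    (0 < (Lval a₂ a₁ a₃ * a₂ * modInv a₁ a₃) % a₃ ∧ Lval a₂ a₁ a₃ < a₃) ∧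
    (0 < (Lval a₃ a₁ a₂ * a₃ * modInv a₁ a₂) % a₂ ∧ Lval a₃ a₁ a₂ < a₂) := by
  obtain ⟨h1, h2, h3⟩ := hgt
  have ha₃ : 1 < a₃ := h3
  have ha₂ : 1 < a₂ := lt_trans h3 h2
  -- L₂ < a₃
  have hlt2 : Lval a₂ a₁ a₃ < a₃ :=
    Lval_lt a₁ a₂ a₃ h13 h23 ha₃ hL₁
  -- L₃ < a₂
  have hL₁' : 1 < Lval a₁ a₃ a₂ := by rwa [← Lval_comm]
  have hlt3 : Lval a₃ a₁ a₂ < a₂ :=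
    Lval_lt a₁ a₃ a₂ h12 h23.symm ha₂ hL₁'
  have hpos2 : 0 < Lval a₂ a₁ a₃ := Lval_pos a₁ a₂ a₃ (by omega)
  have hpos3 : 0 < Lval a₃ a₁ a₂ := Lval_pos a₁ a₃ a₂ (by omega)
  exact ⟨⟨mod_pos _ a₁ a₂ a₃ hpos2 hlt2 h23 h13 ha₃, hlt2⟩,
         ⟨mod_pos _ a₁ a₃ a₂ hpos3 hlt3 h23.symm h12 ha₂, hlt3⟩⟩
end
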